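/- Let T ⊆ ℂ be a set of three non-collinear points forming a scalene triangle, i.e., the three pairwise distances between points of T are pairwise distinct. Then there exist a constant c > 0 and a threshold N such that for all n ≥ N, S_T(n, 3) ≥ c·n^{log 9 / log 5}. -/

import Mathlib

open MeasureTheory

noncomputable section

/-- `Q` is a similar copy of `P`: the image of `P` under an
orientation-preserving similarity `p ↦ z·p + w`, `z ≠ 0`. -/
def SimilarCopy (P Q : Finset ℂ) : Prop :=
  ∃ z w : ℂ, z ≠ 0 ∧ (Q : Set ℂ) = (fun p => z * p + w) '' (P : Set ℂ)

/-- `SP P Q` is the number of subsets of `Q` that are similar copies of `P`. -/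
def SP (P Q : Finset ℂ) : ℕ :=
  letI := Classical.decPred (SimilarCopy P)
  (Q.powerset.filter (SimilarCopy P)).card

/-- `Q` has no `m` points on a line: every collinear subset has at most `m - 1` points. -/
def NoMOnLine (m : ℕ) (Q : Finset ℂ) : Prop :=
  ∀ S ⊆ Q, Collinear ℝ (S : Set ℂ) → S.card ≤ m - 1

/-- `Q` has `m` points on a line. -/
def HasMOnLine (m : ℕ) (Q : Finset ℂ) : Prop :=
  ∃ S ⊆ Q, S.card = m ∧ Collinear ℝ (S : Set ℂ)

/-- The number of orientation-preserving isometries of `ℂ` mapping `P` onto itself,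
i.e. maps `p ↦ u·p + w` with `|u| = 1` fixing `P` setwise. -/
def IsoPlusCard (P : Finset ℂ) : ℕ :=
  {uw : ℂ × ℂ | ‖uw.1‖ = 1 ∧
    (fun p => uw.1 * p + uw.2) '' (P : Set ℂ) = (P : Set ℂ)}.ncard

/-- The index of `A` with respect to the pattern `P`. -/
def indexP (P A : Finset ℂ) : ℝ :=
  Real.log ((IsoPlusCard P : ℝ) * SP P A + A.card) / Real.log A.card

/-- `SPnm P n m` : the maximum of `SP P Q` over `n`-point sets `Q`
with no `m` points on a line. -/
def SPnm (P : Finset ℂ) (n m : ℕ) : ℕ :=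
  sSup {k | ∃ Q : Finset ℂ, Q.card = n ∧ NoMOnLine m Q ∧ SP P Q = k}

/-- `SPn P n` : the maximum of `SP P Q` over all `n`-point sets `Q`. -/
def SPn (P : Finset ℂ) (n : ℕ) : ℕ :=
  sSup {k | ∃ Q : Finset ℂ, Q.card = n ∧ SP P Q = k}

/-- The Minkowski sum `B + C` of two finite sets of complex numbers. -/
def minkSum (B C : Finset ℂ) : Finset ℂ :=
  letI := Classical.decEq ℂ
  Finset.image₂ (· + ·) B C

/-- `Q` contains four pairwise distinct points forming a parallelogram. -/
def HasParallelogram (Q : Finset ℂ) : Prop :=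
  ∃ p₁ ∈ Q, ∃ p₂ ∈ Q, ∃ p₃ ∈ Q, ∃ p₄ ∈ Q,
    p₁ ≠ p₂ ∧ p₁ ≠ p₃ ∧ p₁ ≠ p₄ ∧ p₂ ≠ p₃ ∧ p₂ ≠ p₄ ∧ p₃ ≠ p₄ ∧
    p₂ - p₁ = p₄ - p₃

/-- `Q` is parallelogram-free: no 3 collinear points and no parallelogram. -/
def ParallelogramFree (Q : Finset ℂ) : Prop :=
  (∀ S ⊆ Q, Collinear ℝ (S : Set ℂ) → S.card ≤ 2) ∧ ¬ HasParallelogram Q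

/-- The set `Q(P, A, u, v) = ⋃_{p ∈ P} (u·p + (v·p − p + 1)·A)`. -/
def Qset (P A : Finset ℂ) (u v : ℂ) : Finset ℂ :=
  letI := Classical.decEq ℂ
  P.biUnion fun p => A.image fun a => u * p + (v * p - p + 1) * a

/-- The vertex set of the regular `k`-gon. -/
def Rpoly (k : ℕ) : Finset ℂ :=
  letI := Classical.decEq ℂ
  (Finset.range k).image fun j : ℕ => Complex.exp (2 * Real.pi * Complex.I * (j : ℂ) / (k : ℂ))

/-- `ω = e^{2πi/3}`. -/
def omega3 : ℂ := Complex.exp (2 * Real.pi * Complex.I / 3)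

/-- The vertex set `{1, ω, ω²}` of an equilateral triangle. -/
def triEq : Finset ℂ :=
  letI := Classical.decEq ℂ
  {1, omega3, omega3 ^ 2}

/-- The triangle with vertices `a`, `b`, `c`. -/
def tri (a b c : ℂ) : Finset ℂ :=
  letI := Classical.decEq ℂ
  {a, b, c}

/-!
Write `N(Q)` for the number of images of `T` inside `Q` under the maps `p ↦ z p + w` with `z`
arbitrary; the constant maps contribute the singletons, so `N(Q) = S_T(Q) + |Q|`. If
`(b, a) ↦ b + μ a` is injective on `B × A`, pairing an image in `B` with an image in `A` gives an
image in `B + μ A`, whence `N(B + μ A) ≥ N(B) N(A)`. For `μ = t + t² i` with all but finitely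
many real `t` this map is injective and `B + μ A` again has no three collinear points, since the
collinearity of three of its points is a nonzero polynomial condition of degree at most 4 in `t`.

Normalise `T` to `{0, 1, z}`. The five points `0, 1, z, z², z² - z + 1` are in general position
and contain four copies of `T`, so `N = 9`. Iterating gives `5^m` points with `N ≥ 9^m`, that is
`S_T ≥ 9^m - 5^m`, and adding generic points handles the sizes between powers of `5`.
-/

open Complex ComplexConjugate Filter

namespace SimilarCopy

theorem symm {P Q : Finset ℂ} (h : SimilarCopy P Q) : SimilarCopy Q P := by
  obtain ⟨z, w, hz, hQ⟩ := h
  refine ⟨z⁻¹, -(z⁻¹ * w), inv_ne_zero hz, ?_⟩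
  rw [hQ, Set.image_image]
  conv_lhs => rw [← Set.image_id (P : Set ℂ)]
  exact Set.image_congr fun p _ => by simp only [id]; field_simp; ring

theorem trans {P Q R : Finset ℂ} (h₁ : SimilarCopy P Q) (h₂ : SimilarCopy Q R) :
    SimilarCopy P R := by
  obtain ⟨z₁, w₁, hz₁, hQ⟩ := h₁
  obtain ⟨z₂, w₂, hz₂, hR⟩ := h₂
  refine ⟨z₂ * z₁, z₂ * w₁ + w₂, mul_ne_zero hz₂ hz₁, ?_⟩
  rw [hR, hQ, Set.image_image]
  exact Set.image_congr fun p _ => by ring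

theorem card_eq {P Q : Finset ℂ} (h : SimilarCopy P Q) : Q.card = P.card := by
  obtain ⟨z, w, hz, hQ⟩ := h
  have hinj : Function.Injective fun p : ℂ => z * p + w := fun p q hpq => by
    simpa [hz] using hpq
  rw [← Set.ncard_coe_finset, hQ, Set.ncard_image_of_injective _ hinj, Set.ncard_coe_finset]

end SimilarCopy

theorem SP_eq_card_filter (P Q : Finset ℂ) [DecidablePred (SimilarCopy P)] :
    SP P Q = (Q.powerset.filter (SimilarCopy P)).card := by
  unfold SP
  congr

theorem SP_congr {P P' : Finset ℂ} (h : SimilarCopy P P') (Q : Finset ℂ) : SP P Q = SP P' Q := by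
  classical
  simp only [SP_eq_card_filter]
  exact congrArg _ (Finset.filter_congr fun S _ => ⟨h.symm.trans, h.trans⟩)

theorem SP_mono {P Q Q' : Finset ℂ} (h : Q ⊆ Q') : SP P Q ≤ SP P Q' := by
  classical
  simp only [SP_eq_card_filter]
  exact Finset.card_le_card (Finset.filter_subset_filter _ (Finset.powerset_mono.2 h))

theorem SP_le_SPnm {P Q : Finset ℂ} {m : ℕ} (hQ : NoMOnLine m Q) : SP P Q ≤ SPnm P Q.card m := by
  refine le_csSup ⟨2 ^ Q.card, ?_⟩ ⟨Q, rfl, hQ, rfl⟩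
  rintro _ ⟨Q', hQ', -, rfl⟩
  classical
  rw [SP_eq_card_filter, ← hQ', ← Finset.card_powerset]
  exact Finset.card_filter_le _ _

def IsAffineImage (P S : Finset ℂ) : Prop :=
  ∃ z w : ℂ, (S : Set ℂ) = (fun p => z * p + w) '' P

def affineImages (P Q : Finset ℂ) : Finset (Finset ℂ) :=
  letI := Classical.decPred (IsAffineImage P)
  Q.powerset.filter (IsAffineImage P)

theorem mem_affineImages {P Q S : Finset ℂ} :
    S ∈ affineImages P Q ↔ S ⊆ Q ∧ ∃ z w : ℂ, S = P.image fun p => z * p + w := by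
  simp only [affineImages, IsAffineImage, Finset.mem_filter, Finset.mem_powerset,
    ← Finset.coe_image, Finset.coe_inj]

theorem isAffineImage_iff {P S : Finset ℂ} (hP : P.Nonempty) :
    IsAffineImage P S ↔ SimilarCopy P S ∨ ∃ q, S = {q} := by
  constructor
  · rintro ⟨z, w, hS⟩
    by_cases hz : z = 0
    · subst hz
      refine Or.inr ⟨w, Finset.coe_injective ?_⟩
      simpa [hS] using (Finset.coe_nonempty.2 hP).image_const w
    · exact Or.inl ⟨z, w, hz, hS⟩
  · rintro (⟨z, w, -, hS⟩ | ⟨q, rfl⟩)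
    · exact ⟨z, w, hS⟩
    · refine ⟨0, q, ?_⟩
      simpa using ((Finset.coe_nonempty.2 hP).image_const q).symm

theorem card_affineImages {P : Finset ℂ} (hP : P.Nontrivial) (Q : Finset ℂ) :
    (affineImages P Q).card = SP P Q + Q.card := by
  classical
  have hsplit : affineImages P Q =
      Q.powerset.filter (SimilarCopy P) ∪ Q.image ({·}) := by
    ext S
    simp only [affineImages, Finset.mem_filter, Finset.mem_powerset, Finset.mem_union,
      Finset.mem_image, isAffineImage_iff hP.nonempty]
    constructor
    · rintro ⟨hSQ, hS | ⟨q, rfl⟩⟩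
      · exact Or.inl ⟨hSQ, hS⟩
      · exact Or.inr ⟨q, Finset.singleton_subset_iff.1 hSQ, rfl⟩
    · rintro (⟨hSQ, hS⟩ | ⟨q, hq, rfl⟩)
      · exact ⟨hSQ, Or.inl hS⟩
      · exact ⟨Finset.singleton_subset_iff.2 hq, Or.inr ⟨q, rfl⟩⟩
  have hdisj : Disjoint (Q.powerset.filter (SimilarCopy P)) (Q.image ({·})) := by
    refine Finset.disjoint_left.2 fun S hS hS' => ?_
    obtain ⟨q, -, rfl⟩ := Finset.mem_image.1 hS'
    have := (Finset.mem_filter.1 hS).2.card_eq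
    rw [Finset.card_singleton] at this
    exact (Finset.one_lt_card_iff_nontrivial.2 hP).ne this
  rw [hsplit, Finset.card_union_of_disjoint hdisj,
    Finset.card_image_of_injective _ Finset.singleton_injective, SP_eq_card_filter]

def addScaled (B : Finset ℂ) (μ : ℂ) (A : Finset ℂ) : Finset ℂ :=
  (B ×ˢ A).image fun e => e.1 + μ * e.2

section addScaled

variable {B A : Finset ℂ} {μ : ℂ}

theorem card_addScaled (hinj : Set.InjOn (fun e : ℂ × ℂ => e.1 + μ * e.2) (B ×ˢ A : Finset _)) :
    (addScaled B μ A).card = B.card * A.card := by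
  rw [addScaled, Finset.card_image_of_injOn hinj, Finset.card_product]

theorem card_affineImages_mul_le (P : Finset ℂ)
    (hinj : Set.InjOn (fun e : ℂ × ℂ => e.1 + μ * e.2) (B ×ˢ A : Finset _)) :
    (affineImages P B).card * (affineImages P A).card ≤
      (affineImages P (addScaled B μ A)).card := by
  choose! z w hzw using fun S (hS : ∃ z w : ℂ, S = P.image fun p => z * p + w) => hS
  have hparam {S Q} (hS : S ∈ affineImages P Q) : S = P.image fun p => z S * p + w S :=
    hzw S (mem_affineImages.1 hS).2
  set pair : Finset ℂ → Finset ℂ → Finset (ℂ × ℂ) :=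
    fun S R => P.image fun p => (z S * p + w S, z R * p + w R)
  have pair_fst {S} (hS : S ∈ affineImages P B) (R) : (pair S R).image Prod.fst = S := by
    conv_rhs => rw [hparam hS]
    simp only [pair, Finset.image_image]; rfl
  have pair_snd (S) {R} (hR : R ∈ affineImages P A) : (pair S R).image Prod.snd = R := by
    conv_rhs => rw [hparam hR]
    simp only [pair, Finset.image_image]; rfl
  have pair_subset {S R} (hS : S ∈ affineImages P B) (hR : R ∈ affineImages P A) :
      pair S R ⊆ B ×ˢ A := by
    refine Finset.subset_product.trans (Finset.product_subset_product ?_ ?_)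
    · rw [pair_fst hS]; exact (mem_affineImages.1 hS).1
    · rw [pair_snd S hR]; exact (mem_affineImages.1 hR).1
  rw [← Finset.card_product]
  refine Finset.card_le_card_of_injOn (fun SR => (pair SR.1 SR.2).image fun e => e.1 + μ * e.2)
    ?_ ?_
  · rintro ⟨S, R⟩ hSR
    obtain ⟨hS, hR⟩ := Finset.mem_product.1 hSR
    refine mem_affineImages.2 ⟨Finset.image_subset_image (pair_subset hS hR),
      z S + μ * z R, w S + μ * w R, ?_⟩
    simp only [pair, Finset.image_image]
    exact Finset.image_congr fun p _ => by simp only [Function.comp]; ring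
  · rintro ⟨S, R⟩ hSR ⟨S', R'⟩ hSR' heq
    obtain ⟨hS, hR⟩ : S ∈ affineImages P B ∧ R ∈ affineImages P A := Finset.mem_product.1 hSR
    obtain ⟨hS', hR'⟩ : S' ∈ affineImages P B ∧ R' ∈ affineImages P A :=
      Finset.mem_product.1 hSR'
    have hpair : pair S R = pair S' R' := by
      rw [← Finset.coe_inj, ← hinj.image_eq_image_iff (Finset.coe_subset.2 (pair_subset hS hR))
        (Finset.coe_subset.2 (pair_subset hS' hR')), ← Finset.coe_image, ← Finset.coe_image]
      exact congrArg _ heq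
    have hS_eq : S = S' := by rw [← pair_fst hS R, hpair, pair_fst hS' R']
    have hR_eq : R = R' := by rw [← pair_snd S hR, hpair, pair_snd S' hR']
    rw [hS_eq, hR_eq]

end addScaled

theorem collinear_iff_im_mul_conj (p q r : ℂ) :
    Collinear ℝ ({p, q, r} : Set ℂ) ↔ ((q - p) * conj (r - p)).im = 0 := by
  rw [collinear_iff_of_mem (Set.mem_insert p _)]
  constructor
  · rintro ⟨v, hv⟩
    obtain ⟨s, rfl⟩ := hv q (by simp)
    obtain ⟨t, rfl⟩ := hv r (by simp)
    simp only [vadd_eq_add, add_sub_cancel_right, real_smul, mul_im, mul_re, conj_re, conj_im,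
      ofReal_re, ofReal_im]
    ring
  · intro h
    by_cases hqp : q = p
    · subst hqp
      refine ⟨r - q, ?_⟩
      rintro x (rfl | rfl | rfl)
      · exact ⟨0, by simp⟩
      · exact ⟨0, by simp⟩
      · exact ⟨1, by simp⟩
    refine ⟨q - p, ?_⟩
    rintro x (rfl | rfl | rfl)
    · exact ⟨0, by simp⟩
    · exact ⟨1, by simp⟩
    · have him : ((x - p) / (q - p)).im = 0 := by
        simp only [mul_im, conj_re, conj_im, sub_re, sub_im] at h
        rw [div_im, ← sub_div, sub_re, sub_im, sub_re, sub_im]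
        exact div_eq_zero_iff.2 (Or.inl (by linarith))
      have hreal : ((((x - p) / (q - p)).re : ℝ) : ℂ) = (x - p) / (q - p) :=
        Complex.ext (by simp) (by simp [him])
      refine ⟨((x - p) / (q - p)).re, ?_⟩
      rw [vadd_eq_add, real_smul, hreal, div_mul_cancel₀ _ (sub_ne_zero.2 hqp)]
      ring

theorem noMOnLine_three_iff {Q : Finset ℂ} :
    NoMOnLine 3 Q ↔ ∀ p ∈ Q, ∀ q ∈ Q, ∀ r ∈ Q, p ≠ q → p ≠ r → q ≠ r →
      ¬Collinear ℝ ({p, q, r} : Set ℂ) := by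
  constructor
  · intro hQ p hp q hq r hr hpq hpr hqr hcol
    have hsub : ({p, q, r} : Finset ℂ) ⊆ Q := by
      simp [Finset.insert_subset_iff, hp, hq, hr]
    have hcard := hQ _ hsub (by simpa using hcol)
    rw [Finset.card_eq_three.2 ⟨p, q, r, hpq, hpr, hqr, rfl⟩] at hcard
    omega
  · intro hQ S hSQ hcol
    by_contra! hS
    obtain ⟨p, q, r, hp, hq, hr, hpq, hpr, hqr⟩ := Finset.two_lt_card_iff.1 hS
    refine hQ p (hSQ hp) q (hSQ hq) r (hSQ hr) hpq hpr hqr (hcol.subset ?_)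
    simp [Set.insert_subset_iff, hp, hq, hr]

theorem noMOnLine_three_image {α : Type*} [DecidableEq α] {s : Finset α} {g : α → ℂ}
    (h : ∀ e₁ ∈ s, ∀ e₂ ∈ s, ∀ e₃ ∈ s, e₁ ≠ e₂ → e₁ ≠ e₃ → e₂ ≠ e₃ →
      ¬Collinear ℝ ({g e₁, g e₂, g e₃} : Set ℂ)) :
    NoMOnLine 3 (s.image g) := by
  rw [noMOnLine_three_iff]
  simp only [Finset.mem_image]
  rintro _ ⟨e₁, h₁, rfl⟩ _ ⟨e₂, h₂, rfl⟩ _ ⟨e₃, h₃, rfl⟩ h₁₂ h₁₃ h₂₃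
  exact h e₁ h₁ e₂ h₂ e₃ h₃ (ne_of_apply_ne g h₁₂) (ne_of_apply_ne g h₁₃) (ne_of_apply_ne g h₂₃)

theorem NoMOnLine.insert_three {Q : Finset ℂ} {x : ℂ} (hQ : NoMOnLine 3 Q)
    (hx : ∀ p ∈ Q, ∀ q ∈ Q, p ≠ q → ¬Collinear ℝ ({p, q, x} : Set ℂ)) :
    NoMOnLine 3 (insert x Q) := by
  rw [noMOnLine_three_iff] at hQ ⊢
  simp only [Finset.mem_insert]
  rintro p (rfl | hp) q (rfl | hq) r (rfl | hr) hpq hpr hqr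
  · exact absurd rfl hpq
  · exact absurd rfl hpq
  · exact absurd rfl hpr
  · rw [Set.insert_comm, Set.pair_comm]
    exact hx q hq r hr hqr
  · exact absurd rfl hqr
  · rw [Set.pair_comm]
    exact hx p hp r hr hpr
  · exact hx p hp q hq hpq
  · exact hQ p hp q hq r hr hpq hpr hqr

def parabola (t : ℝ) : ℂ := ⟨t, t ^ 2⟩

theorem parabola_injective : Function.Injective parabola := fun _ _ h => congrArg re h

open Polynomial in
theorem eventually_im_mul_conj_parabola_ne_zero {v₀ v₁ w₀ w₁ : ℂ}
    (h : ¬((v₀ * conj w₀).im = 0 ∧ (v₁ * conj w₁).im = 0 ∧ v₁ * conj w₀ = conj v₀ * w₁)) :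
    ∀ᶠ t in cofinite, ((v₀ + parabola t * v₁) * conj (w₀ + parabola t * w₁)).im ≠ 0 := by
  set c₁ := (v₁ * conj w₀).im + (v₀ * conj w₁).im
  set c₂ := (v₁ * conj w₀).re - (v₀ * conj w₁).re + (v₁ * conj w₁).im
  set f : ℝ[X] := C (v₀ * conj w₀).im + C c₁ * X + C c₂ * X ^ 2 + C (v₁ * conj w₁).im * X ^ 4
  have hf : f ≠ 0 := by
    intro hf
    have hcoeff (k : ℕ) : f.coeff k = 0 := by rw [hf, coeff_zero]
    have h₀ := hcoeff 0
    have h₁ := hcoeff 1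
    have h₂ := hcoeff 2
    have h₄ := hcoeff 4
    simp only [f, coeff_add, coeff_C_mul, coeff_X_pow, coeff_X, coeff_C] at h₀ h₁ h₂ h₄
    norm_num at h₀ h₁ h₂ h₄
    refine h ⟨?_, ?_, Complex.ext ?_ ?_⟩ <;>
      simp only [c₁, c₂, mul_re, mul_im, conj_re, conj_im] at h₀ h₁ h₂ h₄ ⊢ <;> linarith
  have hroots : ∀ᶠ t in cofinite, ¬f.IsRoot t :=
    eventually_cofinite.2 (by simpa using finite_setOfPred_isRoot hf)
  filter_upwards [hroots] with t ht
  convert ht using 1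
  simp only [f, IsRoot, eval_add, eval_mul, eval_C, eval_pow, eval_X, c₁, c₂, parabola, mul_im,
    mul_re, add_re, add_im, conj_re, conj_im]
  constructor <;> intro h' <;> linear_combination h'

theorem eventually_add_parabola_mul_ne {e e' : ℂ × ℂ} (h : e ≠ e') :
    ∀ᶠ t in cofinite, e.1 + parabola t * e.2 ≠ e'.1 + parabola t * e'.2 := by
  obtain ⟨b, a⟩ := e
  obtain ⟨b', a'⟩ := e'
  rcases eq_or_ne a a' with rfl | ha
  · exact Eventually.of_forall fun t h' => h (by simpa using h')
  have hne := parabola_injective.tendsto_cofinite.eventually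
    (eventually_cofinite_ne ((b' - b) / (a - a')))
  filter_upwards [hne] with t ht h'
  refine ht ?_
  rw [eq_div_iff (sub_ne_zero.2 ha)]
  linear_combination h'

theorem eventually_not_collinear_add_parabola_mul {e₁ e₂ e₃ : ℂ × ℂ}
    (h₁₂ : e₁ ≠ e₂) (h₁₃ : e₁ ≠ e₃) (h₂₃ : e₂ ≠ e₃)
    (hfst : e₁.1 ≠ e₂.1 → e₁.1 ≠ e₃.1 → e₂.1 ≠ e₃.1 →
      ¬Collinear ℝ ({e₁.1, e₂.1, e₃.1} : Set ℂ))
    (hsnd : e₁.2 ≠ e₂.2 → e₁.2 ≠ e₃.2 → e₂.2 ≠ e₃.2 →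
      ¬Collinear ℝ ({e₁.2, e₂.2, e₃.2} : Set ℂ)) :
    ∀ᶠ t in cofinite, ¬Collinear ℝ ({e₁.1 + parabola t * e₁.2, e₂.1 + parabola t * e₂.2,
      e₃.1 + parabola t * e₃.2} : Set ℂ) := by
  obtain ⟨b₁, a₁⟩ := e₁
  obtain ⟨b₂, a₂⟩ := e₂
  obtain ⟨b₃, a₃⟩ := e₃
  simp only [collinear_iff_im_mul_conj, ne_eq, Prod.mk.injEq, not_and] at *
  have hgen := eventually_im_mul_conj_parabola_ne_zero
    (v₀ := b₂ - b₁) (v₁ := a₂ - a₁) (w₀ := b₃ - b₁) (w₁ := a₃ - a₁) ?_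
  · filter_upwards [hgen] with t ht
    have h₂₁ : b₂ + parabola t * a₂ - (b₁ + parabola t * a₁) =
        b₂ - b₁ + parabola t * (a₂ - a₁) := by ring
    have h₃₁ : b₃ + parabola t * a₃ - (b₁ + parabola t * a₁) =
        b₃ - b₁ + parabola t * (a₃ - a₁) := by ring
    rwa [h₂₁, h₃₁]
  rintro ⟨hb, ha, hmix⟩
  by_cases hb₁₂ : b₁ = b₂ <;> by_cases hb₁₃ : b₁ = b₃
  · subst hb₁₂ hb₁₃
    exact hsnd (h₁₂ rfl) (h₁₃ rfl) (fun h => h₂₃ rfl h) ha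
  · subst hb₁₂
    rw [sub_self, map_zero, zero_mul, mul_eq_zero, sub_eq_zero, map_eq_zero, sub_eq_zero] at hmix
    exact hmix.elim (fun h => h₁₂ rfl h.symm) (fun h => hb₁₃ h.symm)
  · subst hb₁₃
    rw [sub_self, map_zero, mul_zero, eq_comm, mul_eq_zero, map_eq_zero, sub_eq_zero,
      sub_eq_zero] at hmix
    exact hmix.elim (fun h => hb₁₂ h.symm) (fun h => h₁₃ rfl h.symm)
  by_cases hb₂₃ : b₂ = b₃
  · subst hb₂₃
    have hv : conj (b₂ - b₁) ≠ 0 := (map_ne_zero _).2 (sub_ne_zero.2 (Ne.symm hb₁₂))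
    rw [mul_comm] at hmix
    exact h₂₃ rfl (by linear_combination mul_left_cancel₀ hv hmix)
  · exact hfst hb₁₂ hb₁₃ hb₂₃ hb

theorem eventually_injOn_add_parabola_mul (B A : Finset ℂ) :
    ∀ᶠ t in cofinite, Set.InjOn (fun e : ℂ × ℂ => e.1 + parabola t * e.2) (B ×ˢ A : Finset _) := by
  have h : ∀ᶠ t in cofinite, ∀ e ∈ B ×ˢ A, ∀ e' ∈ B ×ˢ A,
      e ≠ e' → e.1 + parabola t * e.2 ≠ e'.1 + parabola t * e'.2 := by
    simp only [eventually_all_finset, eventually_imp_distrib_left]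
    exact fun e _ e' _ => eventually_add_parabola_mul_ne
  filter_upwards [h] with t ht e he e' he' heq
  by_contra hne
  exact ht e he e' he' hne heq

section generic

variable {B A : Finset ℂ}

theorem eventually_noMOnLine_addScaled_parabola (hB : NoMOnLine 3 B) (hA : NoMOnLine 3 A) :
    ∀ᶠ t in cofinite, NoMOnLine 3 (addScaled B (parabola t) A) := by
  rw [noMOnLine_three_iff] at hB hA
  have h : ∀ᶠ t in cofinite, ∀ e₁ ∈ B ×ˢ A, ∀ e₂ ∈ B ×ˢ A, ∀ e₃ ∈ B ×ˢ A,
      e₁ ≠ e₂ → e₁ ≠ e₃ → e₂ ≠ e₃ → ¬Collinear ℝ ({e₁.1 + parabola t * e₁.2,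
        e₂.1 + parabola t * e₂.2, e₃.1 + parabola t * e₃.2} : Set ℂ) := by
    simp only [eventually_all_finset, eventually_imp_distrib_left]
    intro e₁ h₁ e₂ h₂ e₃ h₃ h₁₂ h₁₃ h₂₃
    rw [Finset.mem_product] at h₁ h₂ h₃
    exact eventually_not_collinear_add_parabola_mul h₁₂ h₁₃ h₂₃
      (hB _ h₁.1 _ h₂.1 _ h₃.1) (hA _ h₁.2 _ h₂.2 _ h₃.2)
  filter_upwards [h] with t ht
  exact noMOnLine_three_image ht

theorem exists_injOn_noMOnLine_addScaled (hB : NoMOnLine 3 B) (hA : NoMOnLine 3 A) :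
    ∃ μ : ℂ, Set.InjOn (fun e : ℂ × ℂ => e.1 + μ * e.2) (B ×ˢ A : Finset _) ∧
      NoMOnLine 3 (addScaled B μ A) :=
  let ⟨t, ht⟩ := ((eventually_injOn_add_parabola_mul B A).and
    (eventually_noMOnLine_addScaled_parabola hB hA)).exists
  ⟨parabola t, ht⟩

end generic

theorem noMOnLine_singleton (x : ℂ) : NoMOnLine 3 {x} := fun S hS _ =>
  (Finset.card_le_card hS).trans (by simp)

theorem exists_noMOnLine_pow_le_card_affineImages (P : Finset ℂ) {A : Finset ℂ}
    (hA : NoMOnLine 3 A) (k : ℕ) :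
    ∃ B : Finset ℂ, B.card = A.card ^ k ∧ NoMOnLine 3 B ∧
      (affineImages P A).card ^ k ≤ (affineImages P B).card := by
  induction k with
  | zero =>
    refine ⟨{0}, by simp, noMOnLine_singleton 0, Finset.card_pos.2 ⟨P.image fun p => 0 * p + 0, ?_⟩⟩
    exact mem_affineImages.2 ⟨fun x hx => by simp_all, 0, 0, rfl⟩
  | succ k ih =>
    obtain ⟨B, hcard, hB, hle⟩ := ih
    obtain ⟨μ, hinj, hB'⟩ := exists_injOn_noMOnLine_addScaled hB hA
    refine ⟨addScaled B μ A, by rw [card_addScaled hinj, hcard, pow_succ], hB', ?_⟩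
    rw [pow_succ]
    exact (Nat.mul_le_mul_right _ hle).trans (card_affineImages_mul_le P hinj)

theorem exists_insert_noMOnLine {Q : Finset ℂ} (hQ : NoMOnLine 3 Q) :
    ∃ x ∉ Q, NoMOnLine 3 (insert x Q) := by
  have hnew : ∀ᶠ t in cofinite, parabola t ∉ Q :=
    parabola_injective.tendsto_cofinite.eventually Q.eventually_cofinite_notMem
  have hoff : ∀ᶠ t in cofinite, ∀ p ∈ Q, ∀ q ∈ Q, p ≠ q →
      ¬Collinear ℝ ({p, q, parabola t} : Set ℂ) := by
    simp only [eventually_all_finset, eventually_imp_distrib_left, collinear_iff_im_mul_conj]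
    intro p _ q _ hpq
    have hgen := eventually_im_mul_conj_parabola_ne_zero
      (v₀ := q - p) (v₁ := 0) (w₀ := -p) (w₁ := 1) <| by
        rintro ⟨-, -, h⟩
        rw [zero_mul, mul_one, eq_comm, map_eq_zero, sub_eq_zero] at h
        exact hpq h.symm
    filter_upwards [hgen] with t ht
    rwa [show parabola t - p = -p + parabola t * 1 by ring,
      show q - p = q - p + parabola t * 0 by ring]
  obtain ⟨t, ht, hcol⟩ := (hnew.and hoff).exists
  exact ⟨parabola t, ht, hQ.insert_three hcol⟩

theorem exists_superset_card_eq_noMOnLine {Q : Finset ℂ} (hQ : NoMOnLine 3 Q) {n : ℕ}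
    (hn : Q.card ≤ n) : ∃ Q' : Finset ℂ, Q ⊆ Q' ∧ Q'.card = n ∧ NoMOnLine 3 Q' := by
  induction n, hn using Nat.le_induction with
  | base => exact ⟨Q, subset_rfl, rfl, hQ⟩
  | succ n _ ih =>
    obtain ⟨Q', hsub, hcard, hQ'⟩ := ih
    obtain ⟨x, hx, hx'⟩ := exists_insert_noMOnLine hQ'
    exact ⟨insert x Q', hsub.trans (Finset.subset_insert _ _),
      by rw [Finset.card_insert_of_notMem hx, hcard], hx'⟩

theorem coe_tri (a b c : ℂ) : (tri a b c : Set ℂ) = {a, b, c} := by simp [tri]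

theorem mem_tri {x a b c : ℂ} : x ∈ tri a b c ↔ x = a ∨ x = b ∨ x = c := by simp [tri]

theorem tri_swap (a b c : ℂ) : tri a b c = tri b a c := by
  unfold tri
  exact Finset.insert_comm _ _ _

theorem tri_zero_one_nontrivial (z : ℂ) : (tri 0 1 z).Nontrivial :=
  ⟨0, mem_tri.2 (Or.inl rfl), 1, mem_tri.2 (Or.inr (Or.inl rfl)), zero_ne_one⟩

theorem similarCopy_tri {α β p q r u v w : ℂ} (hα : α ≠ 0) (hu : α * p + β = u)
    (hv : α * q + β = v) (hw : α * r + β = w) : SimilarCopy (tri p q r) (tri u v w) := by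
  subst hu hv hw
  exact ⟨α, β, hα, by simp [coe_tri, Set.image_insert_eq]⟩

/-- The condition `z.re ≠ 0` (no right angle at `0`) keeps `0`, `1`, `z²` off a common line. -/
structure GoodApex (z : ℂ) : Prop where
  im_ne_zero : z.im ≠ 0
  re_ne_zero : z.re ≠ 0
  norm_ne_one : ‖z‖ ≠ 1
  norm_sub_one_ne_one : ‖z - 1‖ ≠ 1
  norm_ne_norm_sub_one : ‖z‖ ≠ ‖z - 1‖

/-- The images of `{0, 1, z}` under `p ↦ p`, `p ↦ z p`, `p ↦ (z - 1) p + 1` and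
`p ↦ (1 - z) p + z²` all lie in this set. -/
def baseConfig (z : ℂ) : Finset ℂ := {0, 1, z, z ^ 2, z ^ 2 - z + 1}

section baseConfig

variable {z : ℂ} (hz : GoodApex z)
include hz

theorem GoodApex.two_mul_re_ne_one : 2 * z.re ≠ 1 := fun h => hz.norm_ne_norm_sub_one <| by
  rw [norm_def, norm_def, normSq_apply, normSq_apply, sub_re, sub_im, one_re, one_im]
  congr 1
  linear_combination h

theorem noMOnLine_baseConfig : NoMOnLine 3 (baseConfig z) := by
  have hy := hz.im_ne_zero
  have c₁ : z.re ^ 2 + z.im ^ 2 ≠ 0 := by positivity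
  have c₂ : (z.re - 1) ^ 2 + z.im ^ 2 ≠ 0 := by positivity
  have c₃ : z.re ^ 2 + z.im ^ 2 - 1 ≠ 0 := fun h => hz.norm_ne_one <| by
    rw [norm_def, normSq_apply, show z.re * z.re + z.im * z.im = 1 by linear_combination h,
      Real.sqrt_one]
  have c₄ : z.re ^ 2 + z.im ^ 2 - 2 * z.re ≠ 0 := fun h => hz.norm_sub_one_ne_one <| by
    rw [norm_def, normSq_apply, sub_re, sub_im, one_re, one_im,
      show (z.re - 1) * (z.re - 1) + (z.im - 0) * (z.im - 0) = 1 by linear_combination h,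
      Real.sqrt_one]
  have c₅ : 2 * z.re - 1 ≠ 0 := sub_ne_zero.2 hz.two_mul_re_ne_one
  -- each of the ten triangles has area `± z.im * c` with `c` one of `c₁, …, c₅` or `z.re`
  refine (((noMOnLine_singleton _).insert_three ?_).insert_three ?_).insert_three ?_
    |>.insert_three ?_ <;>
  simp only [Finset.mem_insert, Finset.mem_singleton, forall_eq_or_imp, forall_eq] <;>
  repeat' apply And.intro
  all_goals
    intro hpq
    first
    | exact absurd rfl hpq
    | rw [collinear_iff_im_mul_conj]
      simp only [sq, mul_im, mul_re, sub_re, sub_im, add_re, add_im, one_re, one_im, zero_re,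
        zero_im, conj_re, conj_im]
      intro h
      first
      | exact hy (by linear_combination h)
      | exact hy (by linear_combination -h)
      | exact mul_ne_zero hy hz.re_ne_zero (by linear_combination h / 2)
      | exact mul_ne_zero hy hz.re_ne_zero (by linear_combination -h / 2)
      | exact mul_ne_zero hy c₁ (by linear_combination h)
      | exact mul_ne_zero hy c₁ (by linear_combination -h)
      | exact mul_ne_zero hy c₂ (by linear_combination h)
      | exact mul_ne_zero hy c₂ (by linear_combination -h)
      | exact mul_ne_zero hy c₃ (by linear_combination h)
      | exact mul_ne_zero hy c₃ (by linear_combination -h)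
      | exact mul_ne_zero hy c₄ (by linear_combination h)
      | exact mul_ne_zero hy c₄ (by linear_combination -h)
      | exact mul_ne_zero hy c₅ (by linear_combination h)
      | exact mul_ne_zero hy c₅ (by linear_combination -h)

theorem GoodApex.nodup_baseConfig : [0, 1, z, z ^ 2, z ^ 2 - z + 1].Nodup := by
  have hy := hz.im_ne_zero
  have hxy : z.im * z.re ≠ 0 := mul_ne_zero hy hz.re_ne_zero
  have hxy' : z.im * (2 * z.re - 1) ≠ 0 := mul_ne_zero hy (sub_ne_zero.2 hz.two_mul_re_ne_one)
  have hz₁ : z - 1 ≠ 0 := fun h => hy (by simpa using congrArg im h)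
  simp only [List.nodup_cons, List.mem_cons, List.not_mem_nil, or_false, not_or,
    List.nodup_nil, not_false_eq_true, and_true]
  have im_sq : (z ^ 2).im = z.im * z.re * 2 := by simp only [sq, mul_im]; ring
  have im_w : (z ^ 2 - z + 1).im = z.im * (2 * z.re - 1) := by
    simp only [sub_im, add_im, one_im, im_sq]; ring
  refine ⟨⟨zero_ne_one, ?_, ?_, ?_⟩, ⟨?_, ?_, ?_⟩, ⟨?_, ?_⟩, ?_⟩ <;> intro h
  any_goals
    have e := congrArg im h
    simp only [zero_im, one_im, im_sq, im_w] at e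
  · exact hy e.symm
  · exact hxy (by linear_combination -e / 2)
  · exact hxy' e.symm
  · exact hy e.symm
  · exact hxy (by linear_combination -e / 2)
  · exact hxy' e.symm
  · exact hxy' (by linear_combination -e)
  · exact hz₁ (pow_eq_zero_iff two_ne_zero |>.1 (by linear_combination -h))
  · exact hz₁ (by linear_combination h)

theorem card_baseConfig : (baseConfig z).card = 5 := by
  simpa [baseConfig] using List.toFinset_card_of_nodup hz.nodup_baseConfig

theorem four_le_SP_baseConfig : 4 ≤ SP (tri 0 1 z) (baseConfig z) := by
  classical
  have hne := hz.nodup_baseConfig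
  simp only [List.nodup_cons, List.mem_cons, List.not_mem_nil, or_false, not_or,
    List.nodup_nil, not_false_eq_true, and_true] at hne
  obtain ⟨⟨h01, h0z, h0s, h0w⟩, ⟨h1z, h1s, h1w⟩, -, -⟩ := hne
  let copies : Finset (Finset ℂ) :=
    {tri 0 1 z, tri 0 z (z ^ 2), tri 1 z (z ^ 2 - z + 1), tri (z ^ 2) (z ^ 2 - z + 1) z}
  have hsub : copies ⊆ (baseConfig z).powerset.filter (SimilarCopy (tri 0 1 z)) := by
    simp only [copies, Finset.insert_subset_iff, Finset.singleton_subset_iff, Finset.mem_filter,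
      Finset.mem_powerset]
    refine ⟨⟨?_, similarCopy_tri one_ne_zero (β := 0) ?_ ?_ ?_⟩,
      ⟨?_, similarCopy_tri (Ne.symm h0z) (β := 0) ?_ ?_ ?_⟩,
      ⟨?_, similarCopy_tri (sub_ne_zero.2 (Ne.symm h1z)) (β := 1) ?_ ?_ ?_⟩,
      ⟨?_, similarCopy_tri (sub_ne_zero.2 h1z) (β := z ^ 2) ?_ ?_ ?_⟩⟩
    all_goals first
      | intro x hx
        rcases mem_tri.1 hx with rfl | rfl | rfl <;> simp [baseConfig]
      | ring
  have hcard : copies.card = 4 := by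
    have h0 : (0 : ℂ) ∈ tri 0 1 z := mem_tri.2 (Or.inl rfl)
    have h0' : (0 : ℂ) ∈ tri 0 z (z ^ 2) := mem_tri.2 (Or.inl rfl)
    have h1 : (1 : ℂ) ∈ tri 0 1 z := mem_tri.2 (Or.inr (Or.inl rfl))
    have h1' : (1 : ℂ) ∈ tri 1 z (z ^ 2 - z + 1) := mem_tri.2 (Or.inl rfl)
    have n1 : (1 : ℂ) ∉ tri 0 z (z ^ 2) := by simp [mem_tri, Ne.symm h01, h1z, h1s]
    have n0 : (0 : ℂ) ∉ tri 1 z (z ^ 2 - z + 1) := by simp [mem_tri, h01, h0z, h0w]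
    have n0' : (0 : ℂ) ∉ tri (z ^ 2) (z ^ 2 - z + 1) z := by simp [mem_tri, h0s, h0w, h0z]
    have n1' : (1 : ℂ) ∉ tri (z ^ 2) (z ^ 2 - z + 1) z := by simp [mem_tri, h1s, h1w, h1z]
    exact Finset.card_eq_four.2 ⟨_, _, _, _, ne_of_mem_of_not_mem' h1 n1,
      ne_of_mem_of_not_mem' h0 n0, ne_of_mem_of_not_mem' h0 n0', ne_of_mem_of_not_mem' h0' n0,
      ne_of_mem_of_not_mem' h0' n0', ne_of_mem_of_not_mem' h1' n1', rfl⟩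
  rw [SP_eq_card_filter, ← hcard]
  exact Finset.card_le_card hsub

end baseConfig

theorem exists_goodApex_similarCopy {a b c : ℂ} (hncol : ¬Collinear ℝ ({a, b, c} : Set ℂ))
    (hsc : dist a b ≠ dist a c ∧ dist a b ≠ dist b c ∧ dist a c ≠ dist b c) :
    ∃ z, GoodApex z ∧ SimilarCopy (tri a b c) (tri 0 1 z) := by
  obtain ⟨hab_ac, hab_bc, hac_bc⟩ := hsc
  have hab : a ≠ b := fun h => hncol (by simp [h, collinear_pair])
  have hba : b - a ≠ 0 := sub_ne_zero.2 (Ne.symm hab)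
  obtain ⟨z, rfl⟩ : ∃ z, c = a + z * (b - a) := ⟨(c - a) / (b - a), by field_simp; ring⟩
  have hsim : SimilarCopy (tri a b (a + z * (b - a))) (tri 0 1 z) :=
    (similarCopy_tri hba (β := a) (by ring) (by ring) (by ring)).symm
  have hdist_ac : dist a (a + z * (b - a)) = ‖z‖ * dist a b := by
    rw [dist_eq, dist_eq, sub_add_cancel_left, norm_neg, norm_mul, norm_sub_rev a b]
  have hdist_bc : dist b (a + z * (b - a)) = ‖z - 1‖ * dist a b := by
    rw [dist_eq, dist_eq, show b - (a + z * (b - a)) = -((z - 1) * (b - a)) by ring, norm_neg,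
      norm_mul, norm_sub_rev a b]
  have hy : z.im ≠ 0 := fun h => hncol <| by
    rw [collinear_iff_im_mul_conj, add_sub_cancel_left]
    simp only [mul_im, mul_re, conj_re, conj_im, map_mul, h]
    ring
  have h₁ : ‖z‖ ≠ 1 := fun h => hab_ac (by rw [hdist_ac, h, one_mul])
  have h₂ : ‖z - 1‖ ≠ 1 := fun h => hab_bc (by rw [hdist_bc, h, one_mul])
  have h₃ : ‖z‖ ≠ ‖z - 1‖ := fun h => hac_bc (by rw [hdist_ac, hdist_bc, h])
  by_cases hx : z.re = 0
  · -- relabel the triangle so that the right angle is no longer at `0`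
    refine ⟨1 - z, ⟨by simpa using hy, by simp [hx], by rwa [norm_sub_rev],
      by rwa [sub_sub_cancel_left, norm_neg], ?_⟩, hsim.trans ?_⟩
    · rw [norm_sub_rev, sub_sub_cancel_left, norm_neg]
      exact h₃.symm
    · rw [tri_swap 0 1]
      exact similarCopy_tri (α := -1) (β := 1) (by norm_num) (by ring) (by ring) (by ring)
  · exact ⟨z, ⟨hy, hx, h₁, h₂, h₃⟩, hsim⟩

theorem rpow_log_nine_div_log_five_le {n m : ℕ} (hn : n < 5 ^ m) :
    (n : ℝ) ^ (Real.log 9 / Real.log 5) ≤ 9 ^ m := by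
  have h5 : (5 : ℝ) ^ (Real.log 9 / Real.log 5) = 9 := by
    rw [Real.log_div_log, Real.rpow_logb] <;> norm_num
  calc (n : ℝ) ^ (Real.log 9 / Real.log 5)
      ≤ ((5 : ℝ) ^ m) ^ (Real.log 9 / Real.log 5) :=
        Real.rpow_le_rpow (Nat.cast_nonneg n) (by exact_mod_cast hn.le)
          (div_nonneg (Real.log_nonneg (by norm_num)) (Real.log_nonneg (by norm_num)))
    _ = 9 ^ m := by rw [← Real.rpow_pow_comm (by norm_num), h5]

theorem mul_rpow_log_nine_div_log_five_le {n s : ℕ} (hn : 5 ≤ n)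
    (hs : 9 ^ Nat.log 5 n ≤ s + 5 ^ Nat.log 5 n) :
    4 / 81 * (n : ℝ) ^ (Real.log 9 / Real.log 5) ≤ s := by
  obtain ⟨k, hk⟩ : ∃ k, Nat.log 5 n = k + 1 :=
    Nat.exists_eq_add_one.2 (Nat.le_log_of_pow_le (by norm_num) (by simpa using hn))
  rw [hk] at hs
  have h59 : 5 ^ k ≤ 9 ^ k := Nat.pow_le_pow_left (by norm_num) k
  have hs' : 4 * 9 ^ (k + 2) ≤ 81 * s := by
    rw [pow_succ] at hs
    rw [pow_succ, pow_succ]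
    omega
  have hlt : n < 5 ^ (k + 2) := by
    simpa [hk] using Nat.lt_pow_succ_log_self (b := 5) (by norm_num) n
  calc 4 / 81 * (n : ℝ) ^ (Real.log 9 / Real.log 5) ≤ 4 / 81 * 9 ^ (k + 2) := by
        gcongr; exact rpow_log_nine_div_log_five_le hlt
    _ ≤ s := by
        rw [div_mul_eq_mul_div, div_le_iff₀ (by norm_num), mul_comm (s : ℝ)]
        exact_mod_cast hs'

/-- For any scalene triangle `T` (three non-collinear points whose three pairwise
distances are pairwise distinct), `S_T(n, 3) ≥ c·n^{log 9 / log 5}` for some `c > 0`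
and all large `n`. -/
theorem stmt8 (a b c : ℂ) (hncol : ¬ Collinear ℝ ({a, b, c} : Set ℂ))
    (hsc : dist a b ≠ dist a c ∧ dist a b ≠ dist b c ∧ dist a c ≠ dist b c) :
    ∃ C : ℝ, 0 < C ∧ ∃ N : ℕ, ∀ n : ℕ, N ≤ n →
      C * (n : ℝ) ^ (Real.log 9 / Real.log 5) ≤ (SPnm (tri a b c) n 3 : ℝ) := by
  obtain ⟨z, hz, hsim⟩ := exists_goodApex_similarCopy hncol hsc
  refine ⟨4 / 81, by norm_num, 5, fun n hn => ?_⟩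
  obtain ⟨B, hBcard, hB, hBcount⟩ := exists_noMOnLine_pow_le_card_affineImages (tri 0 1 z)
    (noMOnLine_baseConfig hz) (Nat.log 5 n)
  rw [card_baseConfig hz] at hBcard
  rw [card_affineImages (tri_zero_one_nontrivial z), card_affineImages (tri_zero_one_nontrivial z),
    card_baseConfig hz, hBcard] at hBcount
  obtain ⟨Q, hBQ, hQcard, hQ⟩ :=
    exists_superset_card_eq_noMOnLine hB (hBcard ▸ Nat.pow_log_le_self 5 (by omega))
  have hSP : SP (tri 0 1 z) B ≤ SPnm (tri a b c) n 3 :=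
    calc SP (tri 0 1 z) B ≤ SP (tri 0 1 z) Q := SP_mono hBQ
      _ = SP (tri a b c) Q := (SP_congr hsim Q).symm
      _ ≤ SPnm (tri a b c) n 3 := hQcard ▸ SP_le_SPnm hQ
  refine (mul_rpow_log_nine_div_log_five_le hn ?_).trans (Nat.cast_le.2 hSP)
  calc 9 ^ Nat.log 5 n = (4 + 5) ^ Nat.log 5 n := rfl
    _ ≤ (SP (tri 0 1 z) (baseConfig z) + 5) ^ Nat.log 5 n :=
      Nat.pow_le_pow_left (by linarith [four_le_SP_baseConfig hz]) _
    _ ≤ _ := hBcount
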